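/- Let k be a field and λ ∈ k with λ ≠ 0 and λ ≠ 1. Set z = x − y², z' = x − λy², F = x·z·z' in k[x,y]. Let Q_d(2) be the 8×8 matrix over k[x,y] with rows (z, 0, 0, 0, 0, 0, 0, 0), (0, xz, 0, 0, 0, 0, 0, 0), (0, 0, xz, 0, 0, 0, 0, 0), (0, 0, 0, xz, 0, 0, 0, 0), (−x, 0, 0, 0, xz', 0, 0, 0), (0, 0, 0, −xy, 0, xz', 0, 0), (0, 0, 0, −xy, 0, 0, xz', 0), (0, 0, −xy, 0, 0, 0, 0, xz'). Then there exists an 8×8 matrix B over k[x,y] such that Q_d(2)·B = B·Q_d(2) = F·I₈; that is, (Q_d(2), B) is a matrix factorization of F. -/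

import Mathlib

open MvPolynomial

noncomputable section

namespace T36

variable {k : Type} [Field k]

/-- `x = X 0` in `k[x,y]`. -/
def x : MvPolynomial (Fin 2) k := X 0
/-- `y = X 1` in `k[x,y]`. -/
def y : MvPolynomial (Fin 2) k := X 1
/-- `z = x - y²`. -/
def z : MvPolynomial (Fin 2) k := x - y ^ 2
/-- `z' = x - λ y²`. -/
def z' (lam : k) : MvPolynomial (Fin 2) k := x - C lam * y ^ 2
/-- `F = x z z'`. -/
def F (lam : k) : MvPolynomial (Fin 2) k := x * z * z' lam

/-- The matrix `Q_d(2)`. -/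
def Qd2 (lam : k) : Matrix (Fin 8) (Fin 8) (MvPolynomial (Fin 2) k) :=
  !![z, 0, 0, 0, 0, 0, 0, 0;
     0, x * z, 0, 0, 0, 0, 0, 0;
     0, 0, x * z, 0, 0, 0, 0, 0;
     0, 0, 0, x * z, 0, 0, 0, 0;
     -x, 0, 0, 0, x * z' lam, 0, 0, 0;
     0, 0, 0, -(x * y), 0, x * z' lam, 0, 0;
     0, 0, 0, -(x * y), 0, 0, x * z' lam, 0;
     0, 0, -(x * y), 0, 0, 0, 0, x * z' lam]

end T36

/-!
After splitting the indices as `Fin 4 ⊕ Fin 4`, `Q_d(2)` is block lower triangular,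
`[[z • U, 0], [-(x • P), (x z') • 1]]` with `U = diag(1, x, x, x)`.
With `V = diag(x, 1, 1, 1)`, so that `U V = V U = x • 1`, the matrix
`B = [[z' • V, 0], [P V, z • 1]]` is a partner: the diagonal blocks multiply to `x z z' • 1`,
and the lower-left blocks cancel, since `-(x • P) (z' • V) + (x z') • P V = 0` and
`P V (z • U) - z • x • P = 0`.
-/

namespace Matrix

variable {R m n : Type*} [CommRing R] [Fintype m] [Fintype n] [DecidableEq m] [DecidableEq n]

def IsMatrixFactorization (f : R) (A B : Matrix n n R) : Prop :=
  A * B = f • 1 ∧ B * A = f • 1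

theorem IsMatrixFactorization.reindex {f : R} {A B : Matrix m m R} (e : m ≃ n)
    (h : IsMatrixFactorization f A B) :
    IsMatrixFactorization f (reindex e e A) (reindex e e B) := by
  simp only [IsMatrixFactorization, ← coe_reindexAlgEquiv R R, ← map_mul, h.1, h.2, map_smul,
    map_one, and_self]

theorem diagonal_mul_diagonal_eq_smul_one {a b : n → R} {c : R} (h : ∀ i, a i * b i = c) :
    diagonal a * diagonal b = c • (1 : Matrix n n R) := by
  rw [diagonal_mul_diagonal, smul_one_eq_diagonal]
  exact congrArg diagonal (funext h)

theorem isMatrixFactorization_fromBlocks {x z w : R} {U V : Matrix m m R} (P : Matrix n m R)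
    (hUV : U * V = x • 1) (hVU : V * U = x • 1) :
    IsMatrixFactorization (x * z * w) (fromBlocks (z • U) 0 (-(x • P)) ((x * w) • 1))
      (fromBlocks (w • V) 0 (P * V) (z • 1)) := by
  constructor <;>
  · rw [fromBlocks_multiply, ← fromBlocks_one, fromBlocks_smul]
    congr 1 <;>
      simp only [Matrix.smul_mul, Matrix.mul_smul, Matrix.mul_assoc, hUV, hVU, Matrix.neg_mul,
        Matrix.mul_neg, Matrix.mul_zero, Matrix.zero_mul, Matrix.one_mul, Matrix.mul_one, add_zero,
        zero_add, smul_zero] <;>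
      module

end Matrix

namespace T36

open Matrix

variable {k : Type} [Field k]

/-- The cast to `Fin 8` matters: `simp` cannot rewrite the indices of `Qd2 lam` while they have
type `Fin (4 + 4)`. -/
def blockIndex : Fin 4 ⊕ Fin 4 ≃ Fin 8 :=
  finSumFinEquiv.trans (finCongr rfl)

def P : Matrix (Fin 4) (Fin 4) (MvPolynomial (Fin 2) k) :=
  !![1, 0, 0, 0;
     0, 0, 0, y;
     0, 0, 0, y;
     0, 0, y, 0]

def Qd2Blocks (lam : k) : Matrix (Fin 4 ⊕ Fin 4) (Fin 4 ⊕ Fin 4) (MvPolynomial (Fin 2) k) :=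
  fromBlocks (z (k := k) • diagonal ![1, x, x, x]) 0 (-(x (k := k) • P)) ((x * z' lam) • 1)

def Bd2Blocks (lam : k) : Matrix (Fin 4 ⊕ Fin 4) (Fin 4 ⊕ Fin 4) (MvPolynomial (Fin 2) k) :=
  fromBlocks (z' lam • diagonal ![x, 1, 1, 1]) 0 (P * diagonal ![x, 1, 1, 1]) (z (k := k) • 1)

theorem isMatrixFactorization_Qd2Blocks (lam : k) :
    IsMatrixFactorization (F lam) (Qd2Blocks lam) (Bd2Blocks lam) :=
  isMatrixFactorization_fromBlocks _
    (diagonal_mul_diagonal_eq_smul_one fun i => by fin_cases i <;> simp)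
    (diagonal_mul_diagonal_eq_smul_one fun i => by fin_cases i <;> simp)

theorem Qd2_eq_reindex_Qd2Blocks (lam : k) :
    Qd2 lam = reindex blockIndex blockIndex (Qd2Blocks lam) := by
  rw [← Equiv.symm_apply_eq, reindex_symm]
  ext (i | i) (j | j) : 1 <;> fin_cases i <;> fin_cases j <;>
    simp only [reindex_apply, submatrix_apply, Equiv.symm_symm, blockIndex, Equiv.trans_apply,
      finCongr_apply, finSumFinEquiv_apply_left, finSumFinEquiv_apply_right, Fin.castAdd_mk,
      Fin.natAdd_mk, Fin.cast_mk] <;>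
    simp [Qd2, Qd2Blocks, P] <;> ring

end T36

theorem T36_Qd2_matrix_factorization_general (k : Type) [Field k] (lam : k) :
    ∃ B : Matrix (Fin 8) (Fin 8) (MvPolynomial (Fin 2) k),
      T36.Qd2 lam * B = T36.F lam • (1 : Matrix (Fin 8) (Fin 8) (MvPolynomial (Fin 2) k)) ∧
      B * T36.Qd2 lam = T36.F lam • (1 : Matrix (Fin 8) (Fin 8) (MvPolynomial (Fin 2) k)) := by
  rw [T36.Qd2_eq_reindex_Qd2Blocks]
  exact ⟨_, (T36.isMatrixFactorization_Qd2Blocks lam).reindex T36.blockIndex⟩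

theorem T36_Qd2_matrix_factorization (k : Type) [Field k] (lam : k)
    (h0 : lam ≠ 0) (h1 : lam ≠ 1) :
    ∃ B : Matrix (Fin 8) (Fin 8) (MvPolynomial (Fin 2) k),
      T36.Qd2 lam * B = T36.F lam • (1 : Matrix (Fin 8) (Fin 8) (MvPolynomial (Fin 2) k)) ∧
      B * T36.Qd2 lam = T36.F lam • (1 : Matrix (Fin 8) (Fin 8) (MvPolynomial (Fin 2) k)) :=
  T36_Qd2_matrix_factorization_general k lam
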